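/- For any nonempty D_r ⊆ D, let θ̂* and θ̂_r* denote the unique minimizers of L̂_D and L̂_{D_r}, and define Δα_r* ∈ ℝ^{d_out·n} as in Proposition 3.1 (top block (1/λ) ∇_{f^lin(X_f, θ̂*)} L̂_D over D_f := D \ D_r, bottom block −(1/λ)( ∇_{f^lin(X_r, θ̂_r*)} L̂_{D_r} − ∇_{f^lin(X_r, θ̂*)} L̂_D ) over D_r). Then for every test pair (x_t, y_t) ∈ ℝ^{d_in} × ℝ^{d_out}, the exact change in regularized test loss satisfies ℓ(f^lin(x_t, θ̂_r*), y_t) + (λ/2)‖θ̂_r* − θ'‖₂² = ℓ(g^lin(x_t, Δα_r*), y_t) + (λ/2)‖φ(Δα_r*) − θ'‖₂², i.e., L̂_{{(x_t,y_t)}}(θ̂_r*) = L̃_{{(x_t,y_t)}}(Δα_r*). -/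

import Mathlib

open Finset Matrix

noncomputable section

/-- Squared ℓ₂ norm of a finitely-indexed real vector. -/
def sqnorm {ι : Type*} [Fintype ι] (v : ι → ℝ) : ℝ := ∑ i, v i ^ 2

/-- The linearized model `f^lin(x, θ) = f(x, θ') + J(x)(θ - θ')`, where `f0 x = f(x, θ')`
and `J x` is the Jacobian of `f(x, ·)` at `θ'`. -/
def flin {din dout dθ : ℕ}
    (f0 : (Fin din → ℝ) → Fin dout → ℝ)
    (J : (Fin din → ℝ) → Matrix (Fin dout) (Fin dθ) ℝ)
    (θ' : Fin dθ → ℝ) (xt : Fin din → ℝ) (θ : Fin dθ → ℝ) : Fin dout → ℝ :=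
  f0 xt + J xt *ᵥ (θ - θ')

/-- Regularized empirical risk `L̂_S(θ)` of the linearized model over the subset of the
dataset indexed by `S`. -/
def empRisk {din dout dθ n : ℕ}
    (f0 : (Fin din → ℝ) → Fin dout → ℝ)
    (J : (Fin din → ℝ) → Matrix (Fin dout) (Fin dθ) ℝ)
    (θ' : Fin dθ → ℝ) (X : Fin n → Fin din → ℝ) (Y : Fin n → Fin dout → ℝ)
    (ℓ : (Fin dout → ℝ) → (Fin dout → ℝ) → ℝ) (lam : ℝ)
    (S : Finset (Fin n)) (θ : Fin dθ → ℝ) : ℝ :=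
  (S.card : ℝ)⁻¹ * ∑ i ∈ S, (ℓ (flin f0 J θ' (X i) θ) (Y i) + lam / 2 * sqnorm (θ - θ'))

/-- Gradient of the loss `ℓ(·, y)` in its first argument, as a vector. -/
def gradloss {dout : ℕ} (ℓ : (Fin dout → ℝ) → (Fin dout → ℝ) → ℝ)
    (ytgt u : Fin dout → ℝ) : Fin dout → ℝ :=
  fun a => fderiv ℝ (fun v => ℓ v ytgt) u (Pi.single a 1)

/-- Hessian of the loss `ℓ(·, y)` in its first argument, as a matrix. -/
def hessloss {dout : ℕ} (ℓ : (Fin dout → ℝ) → (Fin dout → ℝ) → ℝ)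
    (ytgt u : Fin dout → ℝ) : Fin dout → Fin dout → ℝ :=
  fun a b => fderiv ℝ (fun v => fderiv ℝ (fun w => ℓ w ytgt) v (Pi.single b 1)) u (Pi.single a 1)

/-- Stacked Jacobian `J(X) ∈ ℝ^{d_out·n × d_θ}`, whose `i`-th row block is `J(x_i)`. -/
def JX {din dout dθ n : ℕ}
    (J : (Fin din → ℝ) → Matrix (Fin dout) (Fin dθ) ℝ)
    (X : Fin n → Fin din → ℝ) : Matrix (Fin n × Fin dout) (Fin dθ) ℝ :=
  fun q p => J (X q.1) q.2 p

/-- Empirical NTK Gram matrix `K = K(X, X) = J(X) J(X)ᵀ`. -/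
def Kmat {din dout dθ n : ℕ}
    (J : (Fin din → ℝ) → Matrix (Fin dout) (Fin dθ) ℝ)
    (X : Fin n → Fin din → ℝ) : Matrix (Fin n × Fin dout) (Fin n × Fin dout) ℝ :=
  JX J X * (JX J X)ᵀ

/-- NTK row block `K(x, X) = J(x) J(X)ᵀ ∈ ℝ^{d_out × d_out·n}`. -/
def KxX {din dout dθ n : ℕ}
    (J : (Fin din → ℝ) → Matrix (Fin dout) (Fin dθ) ℝ)
    (X : Fin n → Fin din → ℝ) (xt : Fin din → ℝ) : Matrix (Fin dout) (Fin n × Fin dout) ℝ :=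
  J xt * (JX J X)ᵀ

/-- Reparameterization `φ(Δα) = θ̂* + J(X)ᵀ Δα`. -/
def phi {din dout dθ n : ℕ}
    (J : (Fin din → ℝ) → Matrix (Fin dout) (Fin dθ) ℝ)
    (X : Fin n → Fin din → ℝ) (θstar : Fin dθ → ℝ)
    (Δα : Fin n × Fin dout → ℝ) : Fin dθ → ℝ :=
  θstar + (JX J X)ᵀ *ᵥ Δα

/-- Reparameterized model `g^lin(x, Δα) = f^lin(x, θ̂*) + K(x, X) Δα`. -/
def glin {din dout dθ n : ℕ}
    (f0 : (Fin din → ℝ) → Fin dout → ℝ)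
    (J : (Fin din → ℝ) → Matrix (Fin dout) (Fin dθ) ℝ)
    (θ' : Fin dθ → ℝ) (X : Fin n → Fin din → ℝ) (θstar : Fin dθ → ℝ)
    (xt : Fin din → ℝ) (Δα : Fin n × Fin dout → ℝ) : Fin dout → ℝ :=
  flin f0 J θ' xt θstar + KxX J X xt *ᵥ Δα

/-- Dual risk `L̃_S(Δα) = (1/|S|) Σ_{(x,y)∈S} ( ℓ(g^lin(x, Δα), y) + (λ/2)‖φ(Δα) − θ'‖₂² )`. -/
def dualRisk {din dout dθ n : ℕ}
    (f0 : (Fin din → ℝ) → Fin dout → ℝ)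
    (J : (Fin din → ℝ) → Matrix (Fin dout) (Fin dθ) ℝ)
    (θ' : Fin dθ → ℝ) (X : Fin n → Fin din → ℝ) (Y : Fin n → Fin dout → ℝ)
    (ℓ : (Fin dout → ℝ) → (Fin dout → ℝ) → ℝ) (lam : ℝ) (θstar : Fin dθ → ℝ)
    (S : Finset (Fin n)) (Δα : Fin n × Fin dout → ℝ) : ℝ :=
  (S.card : ℝ)⁻¹ *
    ∑ i ∈ S, (ℓ (glin f0 J θ' X θstar (X i) Δα) (Y i) +
      lam / 2 * sqnorm (phi J X θstar Δα - θ'))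

/-- The dual coefficient vector `Δα_r*` of Proposition 3.1: on the forget indices
(`q.1 ∉ Dr`) it is `(1/λ) ∇_{f^lin(X_f, θ̂*)} L̂_D`, and on the retain indices (`q.1 ∈ Dr`)
it is `−(1/λ)( ∇_{f^lin(X_r, θ̂_r*)} L̂_{D_r} − ∇_{f^lin(X_r, θ̂*)} L̂_D )`. -/
def dalpha {din dout dθ n : ℕ}
    (f0 : (Fin din → ℝ) → Fin dout → ℝ)
    (J : (Fin din → ℝ) → Matrix (Fin dout) (Fin dθ) ℝ)
    (θ' : Fin dθ → ℝ) (X : Fin n → Fin din → ℝ) (Y : Fin n → Fin dout → ℝ)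
    (ℓ : (Fin dout → ℝ) → (Fin dout → ℝ) → ℝ) (lam : ℝ)
    (Dr : Finset (Fin n)) (θstar θrstar : Fin dθ → ℝ) :
    Fin n × Fin dout → ℝ :=
  fun q =>
    if q.1 ∈ Dr then
      -lam⁻¹ * ((Dr.card : ℝ)⁻¹ * gradloss ℓ (Y q.1) (flin f0 J θ' (X q.1) θrstar) q.2
        - (n : ℝ)⁻¹ * gradloss ℓ (Y q.1) (flin f0 J θ' (X q.1) θstar) q.2)
    else
      lam⁻¹ * ((n : ℝ)⁻¹ * gradloss ℓ (Y q.1) (flin f0 J θ' (X q.1) θstar) q.2)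

/-! Stationarity of the two regularized linear problems gives
`λ (θ̂* − θ') = −J(X)ᵀ ∇L̂_D(θ̂*)` and `λ (θ̂_r* − θ') = −J(X_r)ᵀ ∇L̂_{D_r}(θ̂_r*)`, where the
gradients are taken with respect to the model outputs. Subtracting, `θ̂_r* − θ̂* = J(X)ᵀ Δα_r*`,
i.e. `φ(Δα_r*) = θ̂_r*`. Since `K(x, X) = J(x) J(X)ᵀ`, also `g^lin(x, Δα) = f^lin(x, φ(Δα))` for
every `Δα`, so both sides of the identity are the same expression. -/

lemma fderiv_apply_eq_dotProduct_gradloss {m : ℕ} (ℓ : (Fin m → ℝ) → (Fin m → ℝ) → ℝ)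
    (y u w : Fin m → ℝ) :
    fderiv ℝ (fun v => ℓ v y) u w = w ⬝ᵥ gradloss ℓ y u := by
  conv_lhs => rw [← Finset.univ_sum_single w]
  simp only [map_sum, dotProduct, gradloss]
  refine Finset.sum_congr rfl fun a _ => ?_
  rw [← smul_eq_mul, ← map_smul, ← Pi.single_smul, smul_eq_mul, mul_one]

lemma hasDerivAt_sqnorm_add_smul {k : ℕ} (a v : Fin k → ℝ) :
    HasDerivAt (fun t : ℝ => sqnorm (a + t • v)) (2 * (a ⬝ᵥ v)) 0 := by
  have hcoord : ∀ p, HasDerivAt (fun t : ℝ => (a p + t * v p) ^ 2) (2 * (a p * v p)) 0 := by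
    intro p
    simpa [mul_assoc] using (((hasDerivAt_id (0 : ℝ)).mul_const (v p)).const_add (a p)).fun_pow 2
  simpa [sqnorm, dotProduct, Finset.mul_sum] using HasDerivAt.fun_sum fun p _ => hcoord p

section LinearizedRisk

variable {din dout dθ n : ℕ} (f0 : (Fin din → ℝ) → Fin dout → ℝ)
  (J : (Fin din → ℝ) → Matrix (Fin dout) (Fin dθ) ℝ) (θ' : Fin dθ → ℝ)
  (X : Fin n → Fin din → ℝ) (Y : Fin n → Fin dout → ℝ)
  (ℓ : (Fin dout → ℝ) → (Fin dout → ℝ) → ℝ) (lam : ℝ)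

lemma flin_add_smul (x : Fin din → ℝ) (θ v : Fin dθ → ℝ) (t : ℝ) :
    flin f0 J θ' x (θ + t • v) = flin f0 J θ' x θ + t • (J x *ᵥ v) := by
  simp only [flin, add_sub_right_comm θ, mulVec_add, mulVec_smul, add_assoc]

lemma hasDerivAt_loss_flin_add_smul {y : Fin dout → ℝ}
    (hℓ : Differentiable ℝ fun u => ℓ u y) (x : Fin din → ℝ) (θ v : Fin dθ → ℝ) :
    HasDerivAt (fun t : ℝ => ℓ (flin f0 J θ' x (θ + t • v)) y)
      ((J x *ᵥ v) ⬝ᵥ gradloss ℓ y (flin f0 J θ' x θ)) 0 := by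
  have hline : HasDerivAt (fun t : ℝ => flin f0 J θ' x θ + t • (J x *ᵥ v)) (J x *ᵥ v) 0 := by
    simpa using ((hasDerivAt_id (0 : ℝ)).smul_const (J x *ᵥ v)).const_add (flin f0 J θ' x θ)
  have hcomp := (hℓ (flin f0 J θ' x θ)).hasFDerivAt.comp_hasDerivAt_of_eq 0 hline (by simp)
  simpa only [Function.comp_def, ← flin_add_smul, fderiv_apply_eq_dotProduct_gradloss] using hcomp

lemma hasDerivAt_empRisk_add_smul (hdiff : ∀ y, Differentiable ℝ fun u => ℓ u y)
    (S : Finset (Fin n)) (θ v : Fin dθ → ℝ) :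
    HasDerivAt (fun t : ℝ => empRisk f0 J θ' X Y ℓ lam S (θ + t • v))
      ((S.card : ℝ)⁻¹ * ∑ i ∈ S, ((J (X i) *ᵥ v) ⬝ᵥ gradloss ℓ (Y i) (flin f0 J θ' (X i) θ)
        + lam / 2 * (2 * ((θ - θ') ⬝ᵥ v)))) 0 := by
  have hsq := hasDerivAt_sqnorm_add_smul (θ - θ') v
  simp only [sub_add_eq_add_sub] at hsq
  unfold empRisk
  exact (HasDerivAt.fun_sum fun i _ =>
    (hasDerivAt_loss_flin_add_smul f0 J θ' ℓ (hdiff (Y i)) (X i) θ v).fun_add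
      (hsq.const_mul (lam / 2))).const_mul _

theorem empRisk_stationary (hdiff : ∀ y, Differentiable ℝ fun u => ℓ u y)
    {S : Finset (Fin n)} (hS : S.Nonempty) {θ : Fin dθ → ℝ}
    (hmin : ∀ θ₁, empRisk f0 J θ' X Y ℓ lam S θ ≤ empRisk f0 J θ' X Y ℓ lam S θ₁) :
    lam • (θ - θ') =
      -((S.card : ℝ)⁻¹ • ∑ i ∈ S, (J (X i))ᵀ *ᵥ gradloss ℓ (Y i) (flin f0 J θ' (X i) θ)) := by
  set w := lam • (θ - θ') +
    (S.card : ℝ)⁻¹ • ∑ i ∈ S, (J (X i))ᵀ *ᵥ gradloss ℓ (Y i) (flin f0 J θ' (X i) θ)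
  have hcard : (S.card : ℝ) ≠ 0 := Nat.cast_ne_zero.2 hS.card_pos.ne'
  have hdir : ∀ v, w ⬝ᵥ v = 0 := by
    intro v
    have hloc : IsLocalMin (fun t : ℝ => empRisk f0 J θ' X Y ℓ lam S (θ + t • v)) 0 :=
      Filter.Eventually.of_forall fun t => by simpa using hmin (θ + t • v)
    rw [← hloc.hasDerivAt_eq_zero (hasDerivAt_empRisk_add_smul f0 J θ' X Y ℓ lam hdiff S θ v)]
    simp only [w, add_dotProduct, smul_dotProduct, sum_dotProduct, mulVec_transpose,
      ← dotProduct_mulVec, dotProduct_comm _ (J _ *ᵥ v), Finset.sum_add_distrib, Finset.sum_const,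
      nsmul_eq_mul, smul_eq_mul]
    field_simp
    ring
  exact eq_neg_of_add_eq_zero_left (dotProduct_self_eq_zero.1 (hdir w))

lemma JX_transpose_mulVec (v : Fin n × Fin dout → ℝ) :
    (JX J X)ᵀ *ᵥ v = ∑ i, (J (X i))ᵀ *ᵥ fun a => v (i, a) := by
  ext p
  simp [mulVec, dotProduct, JX, Fintype.sum_prod_type]

lemma dalpha_block (Dr : Finset (Fin n)) (θstar θrstar : Fin dθ → ℝ) (i : Fin n) :
    (fun a => dalpha f0 J θ' X Y ℓ lam Dr θstar θrstar (i, a)) =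
      lam⁻¹ • ((n : ℝ)⁻¹ • gradloss ℓ (Y i) (flin f0 J θ' (X i) θstar) -
        if i ∈ Dr then (Dr.card : ℝ)⁻¹ • gradloss ℓ (Y i) (flin f0 J θ' (X i) θrstar) else 0) := by
  ext a
  by_cases hi : i ∈ Dr
  · simp only [dalpha, hi, ↓reduceIte, Pi.smul_apply, Pi.sub_apply, smul_eq_mul]
    ring
  · simp [dalpha, hi]

lemma JX_transpose_mulVec_dalpha (Dr : Finset (Fin n)) (θstar θrstar : Fin dθ → ℝ) :
    (JX J X)ᵀ *ᵥ dalpha f0 J θ' X Y ℓ lam Dr θstar θrstar =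
      lam⁻¹ • ((n : ℝ)⁻¹ • ∑ i, (J (X i))ᵀ *ᵥ gradloss ℓ (Y i) (flin f0 J θ' (X i) θstar) -
        (Dr.card : ℝ)⁻¹ • ∑ i ∈ Dr, (J (X i))ᵀ *ᵥ gradloss ℓ (Y i) (flin f0 J θ' (X i) θrstar)) := by
  simp only [JX_transpose_mulVec, dalpha_block, mulVec_smul, mulVec_sub, apply_ite (mulVec _),
    mulVec_zero, ← Finset.smul_sum, Finset.sum_sub_distrib, Finset.sum_ite_mem, Finset.univ_inter]

theorem JX_transpose_mulVec_dalpha_eq_sub (hdiff : ∀ y, Differentiable ℝ fun u => ℓ u y)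
    (hlam : lam ≠ 0) {Dr : Finset (Fin n)} (hDr : Dr.Nonempty) {θstar θrstar : Fin dθ → ℝ}
    (hmin : ∀ θ, empRisk f0 J θ' X Y ℓ lam univ θstar ≤ empRisk f0 J θ' X Y ℓ lam univ θ)
    (hminr : ∀ θ, empRisk f0 J θ' X Y ℓ lam Dr θrstar ≤ empRisk f0 J θ' X Y ℓ lam Dr θ) :
    (JX J X)ᵀ *ᵥ dalpha f0 J θ' X Y ℓ lam Dr θstar θrstar = θrstar - θstar := by
  have hstat := empRisk_stationary f0 J θ' X Y ℓ lam hdiff (hDr.mono (subset_univ Dr)) hmin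
  have hstatr := empRisk_stationary f0 J θ' X Y ℓ lam hdiff hDr hminr
  rw [card_univ, Fintype.card_fin] at hstat
  rw [JX_transpose_mulVec_dalpha, ← neg_eq_iff_eq_neg.2 hstat, ← neg_eq_iff_eq_neg.2 hstatr,
    neg_sub_neg, ← smul_sub, smul_smul, inv_mul_cancel₀ hlam,
    one_smul, sub_sub_sub_cancel_right]

lemma glin_eq_flin_phi (θstar : Fin dθ → ℝ) (x : Fin din → ℝ) (Δα : Fin n × Fin dout → ℝ) :
    glin f0 J θ' X θstar x Δα = flin f0 J θ' x (phi J X θstar Δα) := by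
  rw [glin, KxX, ← mulVec_mulVec, flin, flin, phi, add_assoc, ← mulVec_add, add_sub_right_comm]

end LinearizedRisk

theorem stmt_16_general {din dout dθ n : ℕ}
    (f0 : (Fin din → ℝ) → Fin dout → ℝ)
    (J : (Fin din → ℝ) → Matrix (Fin dout) (Fin dθ) ℝ)
    (θ' : Fin dθ → ℝ) (X : Fin n → Fin din → ℝ) (Y : Fin n → Fin dout → ℝ)
    (ℓ : (Fin dout → ℝ) → (Fin dout → ℝ) → ℝ) (lam : ℝ)
    (hdiff : ∀ ytgt, Differentiable ℝ fun u => ℓ u ytgt)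
    (hlam : 0 < lam)
    (Dr : Finset (Fin n)) (hDr : Dr.Nonempty)
    (θstar θrstar : Fin dθ → ℝ)
    (hmin : ∀ θ : Fin dθ → ℝ,
      empRisk f0 J θ' X Y ℓ lam Finset.univ θstar ≤ empRisk f0 J θ' X Y ℓ lam Finset.univ θ)
    (hminr : ∀ θ : Fin dθ → ℝ,
      empRisk f0 J θ' X Y ℓ lam Dr θrstar ≤ empRisk f0 J θ' X Y ℓ lam Dr θ) :
    ∀ (xt : Fin din → ℝ) (yt : Fin dout → ℝ),
      ℓ (flin f0 J θ' xt θrstar) yt + lam / 2 * sqnorm (θrstar - θ') =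
        ℓ (glin f0 J θ' X θstar xt (dalpha f0 J θ' X Y ℓ lam Dr θstar θrstar)) yt +
          lam / 2 * sqnorm (phi J X θstar (dalpha f0 J θ' X Y ℓ lam Dr θstar θrstar) - θ') := by
  intro xt yt
  have hphi : phi J X θstar (dalpha f0 J θ' X Y ℓ lam Dr θstar θrstar) = θrstar := by
    rw [phi, JX_transpose_mulVec_dalpha_eq_sub f0 J θ' X Y ℓ lam hdiff hlam.ne' hDr hmin hminr,
      add_sub_cancel]
  rw [glin_eq_flin_phi, hphi]

/-- for every test pair `(x_t, y_t)`, the exact change in regularized test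
loss satisfies `L̂_{{(x_t, y_t)}}(θ̂_r*) = L̃_{{(x_t, y_t)}}(Δα_r*)`, i.e.
`ℓ(f^lin(x_t, θ̂_r*), y_t) + (λ/2)‖θ̂_r* − θ'‖₂² =
  ℓ(g^lin(x_t, Δα_r*), y_t) + (λ/2)‖φ(Δα_r*) − θ'‖₂²`. -/
theorem stmt_16 {din dout dθ n : ℕ} (hn : 0 < n)
    (f0 : (Fin din → ℝ) → Fin dout → ℝ)
    (J : (Fin din → ℝ) → Matrix (Fin dout) (Fin dθ) ℝ)
    (θ' : Fin dθ → ℝ) (X : Fin n → Fin din → ℝ) (Y : Fin n → Fin dout → ℝ)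
    (ℓ : (Fin dout → ℝ) → (Fin dout → ℝ) → ℝ) (lam : ℝ)
    (hℓ0 : ∀ u ytgt, 0 ≤ ℓ u ytgt)
    (hconv : ∀ ytgt, ConvexOn ℝ Set.univ fun u => ℓ u ytgt)
    (hdiff : ∀ ytgt, Differentiable ℝ fun u => ℓ u ytgt)
    (hlam : 0 < lam)
    (Dr : Finset (Fin n)) (hDr : Dr.Nonempty)
    (θstar θrstar : Fin dθ → ℝ)
    (hmin : ∀ θ : Fin dθ → ℝ,
      empRisk f0 J θ' X Y ℓ lam Finset.univ θstar ≤ empRisk f0 J θ' X Y ℓ lam Finset.univ θ)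
    (hminr : ∀ θ : Fin dθ → ℝ,
      empRisk f0 J θ' X Y ℓ lam Dr θrstar ≤ empRisk f0 J θ' X Y ℓ lam Dr θ) :
    ∀ (xt : Fin din → ℝ) (yt : Fin dout → ℝ),
      ℓ (flin f0 J θ' xt θrstar) yt + lam / 2 * sqnorm (θrstar - θ') =
        ℓ (glin f0 J θ' X θstar xt (dalpha f0 J θ' X Y ℓ lam Dr θstar θrstar)) yt +
          lam / 2 * sqnorm (phi J X θstar (dalpha f0 J θ' X Y ℓ lam Dr θstar θrstar) - θ') :=
  stmt_16_general f0 J θ' X Y ℓ lam hdiff hlam Dr hDr θstar θrstar hmin hminr
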